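/- arXiv:2105.02529 — 5 statements merged into one kernel-verified Lean document; each statement's English description precedes it below -/
import Mathlib

section
/- If the product subshift Y × Z is half-synchronized, then both Y and Z are half-synchronized. -/
namespace Paper

variable {A B C : Type*}

def shiftMap (x : ℤ → A) : ℤ → A := fun i => x (i + 1)

def shiftInvMap (x : ℤ → A) : ℤ → A := fun i => x (i - 1)

/-- A subshift: nonempty, shift-invariant (both directions), and closed
(expressed combinatorially: any configuration all of whose central patterns
are approximated by members is a member). -/
def IsSubshift (X : Set (ℤ → A)) : Prop :=
  X.Nonempty ∧ (∀ x ∈ X, shiftMap x ∈ X) ∧ (∀ x ∈ X, shiftInvMap x ∈ X) ∧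
  ∀ x : ℤ → A, (∀ n : ℕ, ∃ y ∈ X, ∀ i : ℤ, |i| ≤ (n : ℤ) → y i = x i) → x ∈ X

/-- The word `x[i, i+k-1]`. -/
def cfgWord (x : ℤ → A) (i : ℤ) (k : ℕ) : List A :=
  List.ofFn (fun t : Fin k => x (i + ((t : ℕ) : ℤ)))

/-- The language of a set of configurations. -/
def lang (X : Set (ℤ → A)) : Set (List A) := {w | ∃ x ∈ X, ∃ i : ℤ, cfgWord x i w.length = w}

def TransitiveShift (X : Set (ℤ → A)) : Prop :=
  ∀ u ∈ lang X, ∀ v ∈ lang X, ∃ w : List A, u ++ w ++ v ∈ lang X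

/-- Left ray of a configuration: `leftRay x n = x (-1-n)`. -/
def leftRay (x : ℤ → A) : ℕ → A := fun n => x (-1 - (n : ℤ))

def rightRay (x : ℤ → A) : ℕ → A := fun n => x (n : ℤ)

def LeftRays (X : Set (ℤ → A)) : Set (ℕ → A) := leftRay '' X

def RightRays (X : Set (ℤ → A)) : Set (ℕ → A) := rightRay '' X

/-- Glue a left ray and a right ray into a configuration. -/
def glue (l r : ℕ → A) : ℤ → A := fun i => if 0 ≤ i then r i.toNat else l (-1 - i).toNat

/-- Follower set of a left-infinite sequence. -/
def foll (X : Set (ℤ → A)) (l : ℕ → A) : Set (ℕ → A) := {r | glue l r ∈ X}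

def wordThen (w : List A) (r : ℕ → A) : ℕ → A :=
  fun n => if h : n < w.length then w.get ⟨n, h⟩ else r (n - w.length)

/-- Follower set of a word. -/
def follW (X : Set (ℤ → A)) (w : List A) : Set (ℕ → A) := {r | wordThen w r ∈ RightRays X}

def occursInLeft (l : ℕ → A) (w : List A) : Prop :=
  ∃ j : ℕ, ∀ k : Fin w.length, l (j + (w.length - 1 - (k : ℕ))) = w.get k

/-- The language of a left-infinite sequence. -/
def langL (l : ℕ → A) : Set (List A) := {w | occursInLeft l w}

/-- The left ray `l` ends with the word `w`. -/
def raySuffix (l : ℕ → A) (w : List A) : Prop :=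
  ∀ k : Fin w.length, l (w.length - 1 - (k : ℕ)) = w.get k

def HalfSyncWord (X : Set (ℤ → A)) (w : List A) : Prop :=
  w ∈ lang X ∧ ∃ l ∈ LeftRays X, raySuffix l w ∧ langL l = lang X ∧ foll X l = follW X w

def HalfSynchronized (X : Set (ℤ → A)) : Prop := TransitiveShift X ∧ ∃ w, HalfSyncWord X w

def SyncWord (X : Set (ℤ → A)) (w : List A) : Prop :=
  w ∈ lang X ∧ ∀ l ∈ LeftRays X, raySuffix l w → foll X l = follW X w

def Synchronized (X : Set (ℤ → A)) : Prop := TransitiveShift X ∧ ∃ w, SyncWord X w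

/-- Product of two subshifts, over the product alphabet. -/
def prodShift (Y : Set (ℤ → B)) (Z : Set (ℤ → C)) : Set (ℤ → B × C) :=
  {x | (fun i => (x i).1) ∈ Y ∧ (fun i => (x i).2) ∈ Z}

/-- Identification of a pair of sets of right rays with a set of right rays
over the product alphabet. -/
def prodRaySet (S : Set (ℕ → B)) (T : Set (ℕ → C)) : Set (ℕ → B × C) :=
  {r | (fun n => (r n).1) ∈ S ∧ (fun n => (r n).2) ∈ T}

/-- Extend a left ray by one more symbol on the right. -/
def extendRay (l : ℕ → A) (a : A) : ℕ → A := fun n => if n = 0 then a else l (n - 1)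

/-- Edge of the Krieger graph from `u` to `v` labeled `a`. -/
def KEdge (X : Set (ℤ → A)) (u : Set (ℕ → A)) (a : A) (v : Set (ℕ → A)) : Prop :=
  ∃ l ∈ LeftRays X, extendRay l a ∈ LeftRays X ∧ u = foll X l ∧ v = foll X (extendRay l a)

def KStep (X : Set (ℤ → A)) (u v : Set (ℕ → A)) : Prop := ∃ a, KEdge X u a v

/-- Existence of a finite path in the Krieger graph. -/
def KReach (X : Set (ℤ → A)) : Set (ℕ → A) → Set (ℕ → A) → Prop :=
  Relation.ReflTransGen (KStep X)

def KVertex (X : Set (ℤ → A)) (v : Set (ℕ → A)) : Prop := ∃ l ∈ LeftRays X, v = foll X l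

/-- A subshift is sofic iff it has finitely many follower sets. -/
def Sofic (X : Set (ℤ → A)) : Prop := {v : Set (ℕ → A) | KVertex X v}.Finite

/-- Vertex of the Fischer graph (w.r.t. half-synchronizing word `w`): a vertex of the
Krieger graph in the maximal strongly connected subgraph containing `foll w`. -/
def FVertex (X : Set (ℤ → A)) (w : List A) (v : Set (ℕ → A)) : Prop :=
  KVertex X v ∧ KReach X (follW X w) v ∧ KReach X v (follW X w)

/-- Directed (multi)graph with vertex type `V` and edge type `E`. -/
structure DiGraph (V : Type*) (E : Type*) where
  ini : E → V
  ter : E → V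

variable {V E V' E' : Type*}

/-- Bi-infinite path on a graph. -/
def BiPath (G : DiGraph V E) (x : ℤ → E) : Prop := ∀ i : ℤ, G.ter (x i) = G.ini (x (i + 1))

/-- `p` is a finite path of `m+1` edges. -/
def FinPath (G : DiGraph V E) (m : ℕ) (p : Fin (m + 1) → E) : Prop :=
  ∀ k : Fin m, G.ter (p k.castSucc) = G.ini (p k.succ)

/-- The subpath `x[i, i+n]` of a bi-infinite path is a shortest path between its endpoints. -/
def GeodesicSeg (G : DiGraph V E) (x : ℤ → E) (i : ℤ) (n : ℕ) : Prop :=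
  ∀ (m : ℕ) (p : Fin (m + 1) → E), FinPath G m p →
    G.ini (p 0) = G.ini (x i) → G.ter (p (Fin.last m)) = G.ter (x (i + (n : ℤ))) → n ≤ m

def EvGeodesic (G : DiGraph V E) (x : ℤ → E) : Prop :=
  ∃ i₀ : ℤ, ∀ i : ℤ, i₀ ≤ i → ∀ n : ℕ, GeodesicSeg G x i n

/-- Strictly proximal pair of bi-infinite paths. -/
def StrictProxPair (x y : ℤ → E) : Prop :=
  (∀ n : ℕ, ∃ i : ℕ, ∀ k : ℕ, k ≤ n → x ((i : ℤ) + (k : ℤ)) = y ((i : ℤ) + (k : ℤ))) ∧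
  ∀ N : ℕ, ∃ i : ℕ, N ≤ i ∧ x ((i : ℕ) : ℤ) ≠ y ((i : ℕ) : ℤ)

def HasEvGeoProxPair (G : DiGraph V E) : Prop :=
  ∃ x y : ℤ → E, BiPath G x ∧ BiPath G y ∧ EvGeodesic G x ∧ EvGeodesic G y ∧ StrictProxPair x y

/-- Edges of the Fischer graph: Krieger edges between Fischer vertices. -/
def FischerE (X : Set (ℤ → A)) (w : List A) : Type _ :=
  {t : Set (ℕ → A) × A × Set (ℕ → A) //
    FVertex X w t.1 ∧ FVertex X w t.2.2 ∧ KEdge X t.1 t.2.1 t.2.2}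

def FischerGraph (X : Set (ℤ → A)) (w : List A) : DiGraph (Set (ℕ → A)) (FischerE X w) :=
  ⟨fun e => e.1.1, fun e => e.1.2.2⟩

def SlidingBlockCode (X : Set (ℤ → A)) (F : (ℤ → A) → (ℤ → B)) : Prop :=
  ∃ (r : ℕ) (f : (Fin (2 * r + 1) → A) → B),
    ∀ x ∈ X, ∀ i : ℤ, F x i = f (fun k => x (i + ((k : ℕ) : ℤ) - (r : ℤ)))

def ShiftConjugate (X : Set (ℤ → A)) (Y : Set (ℤ → B)) : Prop :=
  ∃ F : (ℤ → A) → (ℤ → B), SlidingBlockCode X F ∧ Set.InjOn F X ∧ F '' X = Y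

def DirectPrime (X : Set (ℤ → A)) : Prop :=
  ∀ (B C : Type) (_ : Finite B) (_ : Finite C) (Y : Set (ℤ → B)) (Z : Set (ℤ → C)),
    IsSubshift Y → IsSubshift Z → ShiftConjugate X (prodShift Y Z) →
    (∃ y, Y = {y}) ∨ (∃ z, Z = {z})

/-!
Follower sets of a product split coordinatewise: a right ray follows a left ray `l` (or a word
`w`) iff each coordinate follows the corresponding coordinate of `l` (of `w`). Let `w` be
half-synchronizing for `Y × Z`, witnessed by the left half `l` of a point `x₀`. Pair a right ray
over `B` with the second coordinate of the right half of `x₀`; that coordinate follows both the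
second coordinate of `l` and that of `w` in `Z`, so `foll l = foll w` projects to the same identity
for the first coordinates in `Y`. Languages and transitivity pass to `Y` because every word of `Y`
lifts to `Y × Z` once `Z` is nonempty. Swapping the coordinates gives the claim for `Z`.
-/

lemma cfgWord_length (x : ℤ → A) (i : ℤ) (k : ℕ) : (cfgWord x i k).length = k :=
  List.length_ofFn

lemma cfgWord_map (f : A → B) (x : ℤ → A) (i : ℤ) (k : ℕ) :
    cfgWord (fun n => f (x n)) i k = (cfgWord x i k).map f := by
  simp only [cfgWord, List.map_ofFn]
  rfl

lemma map_mem_lang {X : Set (ℤ → A)} {Y : Set (ℤ → B)} (f : A → B)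
    (hf : ∀ x ∈ X, (fun i => f (x i)) ∈ Y) {w : List A} (hw : w ∈ lang X) :
    w.map f ∈ lang Y := by
  obtain ⟨x, hx, i, hxw⟩ := hw
  exact ⟨_, hf x hx, i, by rw [List.length_map, cfgWord_map, hxw]⟩

lemma TransitiveShift.of_lang_eq_image {X : Set (ℤ → A)} {Y : Set (ℤ → B)} (f : A → B)
    (hf : lang Y = List.map f '' lang X) (hX : TransitiveShift X) : TransitiveShift Y := by
  intro _ hu _ hv
  rw [hf] at hu hv ⊢
  obtain ⟨u, hu, rfl⟩ := hu
  obtain ⟨v, hv, rfl⟩ := hv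
  obtain ⟨w, huwv⟩ := hX u hu v hv
  exact ⟨w.map f, u ++ w ++ v, huwv, by simp⟩

lemma glue_leftRay_rightRay (x : ℤ → A) : glue (leftRay x) (rightRay x) = x := by
  funext i
  simp only [glue, leftRay, rightRay]
  split <;> congr 1 <;> omega

lemma glue_map (f : A → B) (l r : ℕ → A) :
    (fun i => f (glue l r i)) = glue (fun n => f (l n)) (fun n => f (r n)) := by
  funext i
  simp only [glue]
  split <;> rfl

lemma wordThen_map (f : A → B) (w : List A) (r : ℕ → A) :
    (fun n => f (wordThen w r n)) = wordThen (w.map f) (fun n => f (r n)) := by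
  funext n
  by_cases h : n < w.length <;> simp [wordThen, h]

lemma raySuffix.map {l : ℕ → A} {w : List A} (f : A → B) (h : raySuffix l w) :
    raySuffix (fun n => f (l n)) (w.map f) := by
  intro k
  simpa using congrArg f (h ⟨k, by simpa using k.2⟩)

lemma langL_map (f : A → B) (l : ℕ → A) :
    langL (fun n => f (l n)) = List.map f '' langL l := by
  ext u
  constructor
  · rintro ⟨j, hj⟩
    refine ⟨List.ofFn fun k : Fin u.length => l (j + (u.length - 1 - k)), ⟨j, fun k => ?_⟩, ?_⟩
    · simp
    · exact List.ext_get (by simp) fun k _ _ => by simpa using hj ⟨k, by simpa⟩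
  · rintro ⟨v, ⟨j, hj⟩, rfl⟩
    refine ⟨j, fun k => ?_⟩
    simpa using congrArg f (hj ⟨k, by simpa using k.2⟩)

def IsProdRecoding (e : A ≃ B × C) (X : Set (ℤ → A)) (Y : Set (ℤ → B)) (Z : Set (ℤ → C)) :
    Prop :=
  ∀ x, x ∈ X ↔ (fun i => e (x i)) ∈ prodShift Y Z

lemma isProdRecoding_prodShift (Y : Set (ℤ → B)) (Z : Set (ℤ → C)) :
    IsProdRecoding (Equiv.refl _) (prodShift Y Z) Y Z :=
  fun _ => Iff.rfl

lemma isProdRecoding_prodShift_swap (Y : Set (ℤ → B)) (Z : Set (ℤ → C)) :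
    IsProdRecoding (Equiv.prodComm B C) (prodShift Y Z) Z Y :=
  fun _ => And.comm

namespace IsProdRecoding

variable {e : A ≃ B × C} {X : Set (ℤ → A)} {Y : Set (ℤ → B)} {Z : Set (ℤ → C)}

lemma fst_mem (h : IsProdRecoding e X Y Z) {x : ℤ → A} (hx : x ∈ X) :
    (fun i => (e (x i)).1) ∈ Y :=
  ((h x).1 hx).1

lemma symm_mem (h : IsProdRecoding e X Y Z) {y : ℤ → B} {z : ℤ → C} (hy : y ∈ Y)
    (hz : z ∈ Z) : (fun i => e.symm (y i, z i)) ∈ X :=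
  (h _).2 (by simpa [prodShift] using ⟨hy, hz⟩)

lemma lang_eq (h : IsProdRecoding e X Y Z) (hZ : Z.Nonempty) :
    lang Y = List.map (fun a => (e a).1) '' lang X := by
  obtain ⟨z, hz⟩ := hZ
  ext u
  constructor
  · rintro ⟨y, hy, i, hu⟩
    refine ⟨cfgWord (fun n => e.symm (y n, z n)) i u.length,
      ⟨_, h.symm_mem hy hz, i, by rw [cfgWord_length]⟩, ?_⟩
    rw [← cfgWord_map]
    simpa using hu
  · rintro ⟨w, hw, rfl⟩
    exact map_mem_lang _ (fun _ => h.fst_mem) hw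

lemma mem_foll_iff (h : IsProdRecoding e X Y Z) (l r : ℕ → A) :
    r ∈ foll X l ↔ (fun n => (e (r n)).1) ∈ foll Y (fun n => (e (l n)).1) ∧
      (fun n => (e (r n)).2) ∈ foll Z (fun n => (e (l n)).2) := by
  simp only [foll, Set.mem_ofPred_eq, h (glue l r), prodShift, glue_map (fun a => (e a).1),
    glue_map (fun a => (e a).2)]

lemma mem_follW_iff (h : IsProdRecoding e X Y Z) (w : List A) (r : ℕ → A) :
    r ∈ follW X w ↔ (fun n => (e (r n)).1) ∈ follW Y (w.map fun a => (e a).1) ∧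
      (fun n => (e (r n)).2) ∈ follW Z (w.map fun a => (e a).2) := by
  simp only [follW, Set.mem_ofPred_eq, RightRays, Set.mem_image, ← wordThen_map]
  constructor
  · rintro ⟨x, hx, hxr⟩
    exact ⟨⟨_, h.fst_mem hx, by rw [← hxr]; rfl⟩, ⟨_, ((h x).1 hx).2, by rw [← hxr]; rfl⟩⟩
  · rintro ⟨⟨y, hy, hyr⟩, ⟨z, hz, hzr⟩⟩
    refine ⟨_, h.symm_mem hy hz, funext fun n => ?_⟩
    change e.symm (rightRay y n, rightRay z n) = _
    rw [hyr, hzr]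
    simp

lemma halfSyncWord (h : IsProdRecoding e X Y Z) (hZ : Z.Nonempty) {w : List A}
    (hw : HalfSyncWord X w) : HalfSyncWord Y (w.map fun a => (e a).1) := by
  obtain ⟨hwX, _, ⟨x₀, hx₀, rfl⟩, hsuf, hlang, hfoll⟩ := hw
  have hx₀foll : rightRay x₀ ∈ foll X (leftRay x₀) := by
    simpa only [foll, Set.mem_ofPred_eq, glue_leftRay_rightRay] using hx₀
  obtain ⟨-, hsnd⟩ := (h.mem_foll_iff _ _).1 hx₀foll
  obtain ⟨-, hsndW⟩ := (h.mem_follW_iff _ _).1 (hfoll ▸ hx₀foll)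
  refine ⟨map_mem_lang _ (fun _ => h.fst_mem) hwX, _, ⟨_, h.fst_mem hx₀, rfl⟩, hsuf.map _,
    (langL_map (fun a => (e a).1) (leftRay x₀)).trans (by rw [hlang, h.lang_eq hZ]), ?_⟩
  ext r
  change r ∈ foll Y (fun n => (e (leftRay x₀ n)).1) ↔ _
  have hpair := Set.ext_iff.1 hfoll fun n => e.symm (r n, (e (rightRay x₀ n)).2)
  simpa [h.mem_foll_iff, h.mem_follW_iff, hsnd, hsndW] using hpair

lemma halfSynchronized (h : IsProdRecoding e X Y Z) (hZ : Z.Nonempty)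
    (hX : HalfSynchronized X) : HalfSynchronized Y := by
  obtain ⟨htrans, _, hw⟩ := hX
  exact ⟨htrans.of_lang_eq_image _ (h.lang_eq hZ), _, h.halfSyncWord hZ hw⟩

end IsProdRecoding

theorem stmt0_general
    (Y : Set (ℤ → B)) (Z : Set (ℤ → C)) (hY : IsSubshift Y) (hZ : IsSubshift Z)
    (h : HalfSynchronized (prodShift Y Z)) :
    HalfSynchronized Y ∧ HalfSynchronized Z :=
  ⟨(isProdRecoding_prodShift Y Z).halfSynchronized hZ.1 h,
    (isProdRecoding_prodShift_swap Y Z).halfSynchronized hY.1 h⟩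

theorem stmt0 [Finite B] [Finite C]
    (Y : Set (ℤ → B)) (Z : Set (ℤ → C)) (hY : IsSubshift Y) (hZ : IsSubshift Z)
    (h : HalfSynchronized (prodShift Y Z)) :
    HalfSynchronized Y ∧ HalfSynchronized Z :=
  stmt0_general Y Z hY hZ h

end Paper
end

section
/- If (w₁, w₂) is a half-synchronizing word of the product subshift Y × Z (with w₁ ∈ L(Y), w₂ ∈ L(Z) of equal length), then w₁ is a half-synchronizing word of Y and w₂ is a half-synchronizing word of Z. -/
/-!
The language and suffix conditions pass to each coordinate because the coordinate projection is a
letter-to-letter map onto the factor (the other factor being nonempty). For the follower condition,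
the follower set of a left ray of `Y × Z`, and likewise that of a word, is the product of the
follower sets of its two coordinates. The follower set of the left half of a point contains its
right half, so this product is nonempty, and a nonempty product of sets determines its factors.
-/

namespace Paper

variable {A B C : Type*}

variable {V E V' E' : Type*}

section LetterMap

variable {A' : Type*} (f : A → A')

lemma cfgWord_comp (x : ℤ → A) (i : ℤ) (k : ℕ) :
    cfgWord (f ∘ x) i k = (cfgWord x i k).map f := by
  simp [cfgWord, List.map_ofFn, Function.comp_def]

lemma lang_image_comp (X : Set (ℤ → A)) : lang ((f ∘ ·) '' X) = List.map f '' lang X := by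
  ext u
  constructor
  · rintro ⟨_, ⟨x, hx, rfl⟩, i, hi⟩
    refine ⟨cfgWord x i u.length, ⟨x, hx, i, by simp [cfgWord]⟩, ?_⟩
    rw [← cfgWord_comp, hi]
  · rintro ⟨w, ⟨x, hx, i, hi⟩, rfl⟩
    exact ⟨f ∘ x, ⟨x, hx, rfl⟩, i, by rw [List.length_map, cfgWord_comp, hi]⟩

lemma langL_comp (l : ℕ → A) : langL (f ∘ l) = List.map f '' langL l := by
  ext u
  constructor
  · rintro ⟨j, hj⟩
    refine ⟨List.ofFn fun k : Fin u.length => l (j + (u.length - 1 - k)), ⟨j, fun k => ?_⟩, ?_⟩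
    · simp
    · rw [List.map_ofFn]
      conv_rhs => rw [← List.ofFn_get u]
      exact congrArg List.ofFn (funext hj)
  · rintro ⟨w, ⟨j, hj⟩, rfl⟩
    exact ⟨j, fun k => by simpa using congrArg f (hj ⟨k, by simpa using k.2⟩)⟩

lemma raySuffix.comp {l : ℕ → A} {w : List A} (h : raySuffix l w) :
    raySuffix (f ∘ l) (w.map f) := fun k => by
  simpa using congrArg f (h ⟨k, by simpa using k.2⟩)

lemma comp_glue (l r : ℕ → A) : f ∘ glue l r = glue (f ∘ l) (f ∘ r) := by
  funext i
  simp only [glue, Function.comp_apply, apply_ite f]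

lemma comp_wordThen (w : List A) (r : ℕ → A) :
    f ∘ wordThen w r = wordThen (w.map f) (f ∘ r) := by
  funext n
  by_cases h : n < w.length <;> simp [wordThen, h]

lemma halfSyncWord_of_image {X : Set (ℤ → A)} {Y : Set (ℤ → A')} (hY : (f ∘ ·) '' X = Y)
    {w : List A} {x : ℤ → A} (hx : x ∈ X) (hw : w ∈ lang X) (hsuf : raySuffix (leftRay x) w)
    (hlang : langL (leftRay x) = lang X)
    (hfoll : foll Y (f ∘ leftRay x) = follW Y (w.map f)) :
    HalfSyncWord Y (w.map f) := by
  subst hY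
  refine ⟨?_, f ∘ leftRay x, ⟨f ∘ x, ⟨x, hx, rfl⟩, rfl⟩, hsuf.comp f, ?_, hfoll⟩
  · rw [lang_image_comp]
    exact Set.mem_image_of_mem _ hw
  · rw [langL_comp, hlang, lang_image_comp]

end LetterMap

lemma rightRay_mem_foll_leftRay {X : Set (ℤ → A)} {x : ℤ → A} (hx : x ∈ X) :
    rightRay x ∈ foll X (leftRay x) := by
  show glue (leftRay x) (rightRay x) ∈ X
  rwa [glue_leftRay_rightRay]

section Product

variable {Y : Set (ℤ → B)} {Z : Set (ℤ → C)}

lemma image_fst_prodShift (hZ : Z.Nonempty) : (Prod.fst ∘ ·) '' prodShift Y Z = Y := by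
  obtain ⟨z, hz⟩ := hZ
  ext y
  refine ⟨?_, fun hy => ⟨fun i => (y i, z i), ⟨hy, hz⟩, rfl⟩⟩
  rintro ⟨x, hx, rfl⟩
  exact hx.1

lemma image_snd_prodShift (hY : Y.Nonempty) : (Prod.snd ∘ ·) '' prodShift Y Z = Z := by
  obtain ⟨y, hy⟩ := hY
  ext z
  refine ⟨?_, fun hz => ⟨fun i => (y i, z i), ⟨hy, hz⟩, rfl⟩⟩
  rintro ⟨x, hx, rfl⟩
  exact hx.2

lemma foll_prodShift (l : ℕ → B × C) :
    foll (prodShift Y Z) l = prodRaySet (foll Y (Prod.fst ∘ l)) (foll Z (Prod.snd ∘ l)) := by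
  ext r
  exact and_congr (Iff.of_eq (congrArg (· ∈ Y) (comp_glue Prod.fst l r)))
    (Iff.of_eq (congrArg (· ∈ Z) (comp_glue Prod.snd l r)))

lemma rightRays_prodShift :
    RightRays (prodShift Y Z) = prodRaySet (RightRays Y) (RightRays Z) := by
  ext r
  constructor
  · rintro ⟨x, hx, rfl⟩
    exact ⟨⟨_, hx.1, rfl⟩, ⟨_, hx.2, rfl⟩⟩
  · rintro ⟨⟨y, hy, hry⟩, ⟨z, hz, hrz⟩⟩
    refine ⟨fun i => (y i, z i), ⟨hy, hz⟩, funext fun n => ?_⟩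
    exact Prod.ext (congrFun hry n) (congrFun hrz n)

lemma follW_prodShift (w : List (B × C)) :
    follW (prodShift Y Z) w =
      prodRaySet (follW Y (w.map Prod.fst)) (follW Z (w.map Prod.snd)) := by
  ext r
  rw [follW, Set.mem_ofPred_eq, rightRays_prodShift]
  exact and_congr (Iff.of_eq (congrArg (· ∈ RightRays Y) (comp_wordThen Prod.fst w r)))
    (Iff.of_eq (congrArg (· ∈ RightRays Z) (comp_wordThen Prod.snd w r)))

lemma prodRaySet_eq_prodRaySet {S S' : Set (ℕ → B)} {T T' : Set (ℕ → C)}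
    (hne : (prodRaySet S T).Nonempty) (h : prodRaySet S T = prodRaySet S' T') :
    S = S' ∧ T = T' := by
  let e := Equiv.arrowProdEquivProdArrow ℕ (fun _ => B) (fun _ => C)
  have hne' : (e ⁻¹' S ×ˢ T).Nonempty := hne
  have h' : e ⁻¹' S ×ˢ T = e ⁻¹' S' ×ˢ T' := h
  rw [← Set.prod_eq_prod_iff_of_nonempty (Set.nonempty_of_nonempty_preimage hne')]
  exact Set.preimage_injective.mpr e.surjective h'

end Product

theorem stmt2_general
    (Y : Set (ℤ → B)) (Z : Set (ℤ → C))
    (w : List (B × C)) (hw : HalfSyncWord (prodShift Y Z) w) :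
    HalfSyncWord Y (w.map Prod.fst) ∧ HalfSyncWord Z (w.map Prod.snd) := by
  obtain ⟨hwX, _, ⟨x, hx, rfl⟩, hsuf, hlangL, hfoll⟩ := hw
  have hne := Set.nonempty_of_mem (rightRay_mem_foll_leftRay hx)
  rw [foll_prodShift] at hne hfoll
  rw [follW_prodShift] at hfoll
  obtain ⟨hfollY, hfollZ⟩ := prodRaySet_eq_prodRaySet hne hfoll
  exact ⟨halfSyncWord_of_image Prod.fst (image_fst_prodShift ⟨_, hx.2⟩) hx hwX hsuf hlangL hfollY,
    halfSyncWord_of_image Prod.snd (image_snd_prodShift ⟨_, hx.1⟩) hx hwX hsuf hlangL hfollZ⟩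

theorem stmt2 [Finite B] [Finite C]
    (Y : Set (ℤ → B)) (Z : Set (ℤ → C)) (hY : IsSubshift Y) (hZ : IsSubshift Z)
    (w : List (B × C)) (hw : HalfSyncWord (prodShift Y Z) w) :
    HalfSyncWord Y (w.map Prod.fst) ∧ HalfSyncWord Z (w.map Prod.snd) :=
  stmt2_general Y Z w hw

end Paper
end

section
/- Let G₁ and G₂ be an induced pair of graphs of a bipartite graph G, and let F be a forward bipartite code from the set of bi-infinite paths on G₁ to the set of bi-infinite paths on G₂. If x is an eventually geodesic bi-infinite path on G₁, then F(x) is an eventually geodesic bi-infinite path on G₂. -/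
namespace Paper

variable {A B C : Type*}

variable {V E V' E' : Type*}

/-- First induced graph of a bipartite graph: edges are `CD` length-2 paths. -/
def bipartiteG1 {V₁ V₂ EC ED : Type*} (cIni : EC → V₁) (cTer : EC → V₂)
    (dIni : ED → V₂) (dTer : ED → V₁) :
    DiGraph V₁ {p : EC × ED // cTer p.1 = dIni p.2} :=
  ⟨fun p => cIni p.1.1, fun p => dTer p.1.2⟩

/-- Second induced graph of a bipartite graph: edges are `DC` length-2 paths. -/
def bipartiteG2 {V₁ V₂ EC ED : Type*} (cIni : EC → V₁) (cTer : EC → V₂)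
    (dIni : ED → V₂) (dTer : ED → V₁) :
    DiGraph V₂ {p : ED × EC // dTer p.1 = cIni p.2} :=
  ⟨fun p => dIni p.1.1, fun p => cTer p.1.2⟩

theorem stmt7 {V₁ V₂ EC ED : Type*} (cIni : EC → V₁) (cTer : EC → V₂)
    (dIni : ED → V₂) (dTer : ED → V₁)
    (x : ℤ → {p : EC × ED // cTer p.1 = dIni p.2})
    (hx : BiPath (bipartiteG1 cIni cTer dIni dTer) x)
    (y : ℤ → {p : ED × EC // dTer p.1 = cIni p.2})
    (hy : ∀ i : ℤ, (y i).1 = ((x i).1.2, (x (i + 1)).1.1))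
    (hgeo : EvGeodesic (bipartiteG1 cIni cTer dIni dTer) x) :
    BiPath (bipartiteG2 cIni cTer dIni dTer) y ∧
      EvGeodesic (bipartiteG2 cIni cTer dIni dTer) y := by
  have hy1 : ∀ i : ℤ, (y i).1.1 = (x i).1.2 := fun i => by rw [hy i]
  have hy2 : ∀ i : ℤ, (y i).1.2 = (x (i + 1)).1.1 := fun i => by rw [hy i]
  constructor
  · intro i
    show cTer (y i).1.2 = dIni (y (i + 1)).1.1
    rw [hy2 i, hy1 (i + 1)]
    exact (x (i + 1)).2
  · obtain ⟨i₀, h⟩ := hgeo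
    refine ⟨i₀, fun i hi n m p hp hini hter => ?_⟩
    have hini' : dIni (p 0).1.1 = dIni (y i).1.1 := hini
    have hter' : cTer (p (Fin.last m)).1.2 = cTer (y (i + (n : ℤ))).1.2 := hter
    set c : Fin (m + 2) → EC := fun k =>
      if h : (k : ℕ) = 0 then (x i).1.1
      else (p ⟨(k : ℕ) - 1, by have := k.isLt; omega⟩).1.2 with hc
    set d : Fin (m + 2) → ED := fun k =>
      if h : (k : ℕ) < m + 1 then (p ⟨(k : ℕ), h⟩).1.1
      else (x (i + (n : ℤ) + 1)).1.2 with hd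
    have hcd : ∀ k : Fin (m + 2), cTer (c k) = dIni (d k) := by
      intro k
      have hk := k.isLt
      by_cases h0 : (k : ℕ) = 0
      · have hlt : (k : ℕ) < m + 1 := by omega
        simp only [hc, hd, dif_pos h0, dif_pos hlt]
        have h1 : (⟨(k : ℕ), hlt⟩ : Fin (m + 1)) = 0 := by ext; simpa using h0
        rw [h1, hini', hy1 i]
        exact (x i).2
      · by_cases h1 : (k : ℕ) < m + 1
        · simp only [hc, hd, dif_neg h0, dif_pos h1]
          have hj : (k : ℕ) - 1 < m := by omega
          have := hp ⟨(k : ℕ) - 1, hj⟩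
          have e1 : (⟨(k : ℕ) - 1, by omega⟩ : Fin (m + 1)) =
              (⟨(k : ℕ) - 1, hj⟩ : Fin m).castSucc := by ext; simp
          have e2 : (⟨(k : ℕ), h1⟩ : Fin (m + 1)) =
              (⟨(k : ℕ) - 1, hj⟩ : Fin m).succ := by ext; simp; omega
          rw [e1, e2]
          exact this
        · simp only [hc, hd, dif_neg h0, dif_neg h1]
          have e1 : (⟨(k : ℕ) - 1, by omega⟩ : Fin (m + 1)) = Fin.last m := by
            ext; simp; omega
          rw [e1, hter', hy2 (i + (n : ℤ))]
          exact (x (i + (n : ℤ) + 1)).2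
    set q : Fin (m + 1 + 1) → {p : EC × ED // cTer p.1 = dIni p.2} :=
      fun k => ⟨(c k, d k), hcd k⟩ with hqdef
    have hq : FinPath (bipartiteG1 cIni cTer dIni dTer) (m + 1) q := by
      intro j
      show dTer (d j.castSucc) = cIni (c j.succ)
      have hj := j.isLt
      have e1 : ((j.castSucc : Fin (m + 2)) : ℕ) = (j : ℕ) := rfl
      have e2 : ((j.succ : Fin (m + 2)) : ℕ) = (j : ℕ) + 1 := rfl
      simp only [hc, hd]
      rw [dif_pos (by omega : ((j.castSucc : Fin (m + 2)) : ℕ) < m + 1),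
        dif_neg (by omega : ¬ ((j.succ : Fin (m + 2)) : ℕ) = 0)]
      have e3 : (⟨((j.castSucc : Fin (m + 2)) : ℕ), by omega⟩ : Fin (m + 1)) =
          (⟨((j.succ : Fin (m + 2)) : ℕ) - 1, by omega⟩ : Fin (m + 1)) := by
        ext; simp [e1, e2]
      rw [e3]
      exact (p _).2
    have key := h i hi (n + 1) (m + 1) q hq ?_ ?_
    · omega
    · show cIni (c 0) = cIni (x i).1.1
      simp [hc]
    · show dTer (d (Fin.last (m + 1))) = dTer (x (i + ((n + 1 : ℕ) : ℤ))).1.2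
      have e : ¬ ((Fin.last (m + 1) : Fin (m + 2)) : ℕ) < m + 1 := by simp
      simp only [hd, dif_neg e]
      congr 2
      push_cast
      ring


end Paper
end

section
/- Let G₁ and G₂ be an induced pair of graphs of a bipartite graph G, and let F be a forward bipartite code between the corresponding sets of bi-infinite paths. If x, y is a strictly proximal pair of bi-infinite paths on G₁, then F(x), F(y) is a strictly proximal pair on G₂. -/
namespace Paper

variable {A B C : Type*}

variable {V E V' E' : Type*}

theorem stmt8 {V₁ V₂ EC ED : Type*} (cIni : EC → V₁) (cTer : EC → V₂)
    (dIni : ED → V₂) (dTer : ED → V₁)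
    (x x' : ℤ → {p : EC × ED // cTer p.1 = dIni p.2})
    (hx : BiPath (bipartiteG1 cIni cTer dIni dTer) x)
    (hx' : BiPath (bipartiteG1 cIni cTer dIni dTer) x')
    (y y' : ℤ → {p : ED × EC // dTer p.1 = cIni p.2})
    (hy : ∀ i : ℤ, (y i).1 = ((x i).1.2, (x (i + 1)).1.1))
    (hy' : ∀ i : ℤ, (y' i).1 = ((x' i).1.2, (x' (i + 1)).1.1))
    (hprox : StrictProxPair x x') :
    StrictProxPair y y' := by
  obtain ⟨hp, hs⟩ := hprox
  constructor
  · intro n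
    obtain ⟨i, hi⟩ := hp (n + 1)
    refine ⟨i, fun k hk => ?_⟩
    apply Subtype.ext
    rw [hy, hy']
    have h1 : x ((i : ℤ) + (k : ℤ)) = x' ((i : ℤ) + (k : ℤ)) := hi k (le_trans hk (Nat.le_succ n))
    have h2 : x ((i : ℤ) + (k : ℤ) + 1) = x' ((i : ℤ) + (k : ℤ) + 1) := by
      have := hi (k + 1) (Nat.succ_le_succ hk)
      push_cast at this
      rw [← add_assoc] at this
      exact this
    rw [h1, h2]
  · intro N
    obtain ⟨i, hNi, hne⟩ := hs (N + 1)
    by_cases hcase : (x (i : ℤ)).1.2 = (x' (i : ℤ)).1.2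
    · -- first components differ, so y (i-1) ≠ y' (i-1)
      have hfst : (x (i : ℤ)).1.1 ≠ (x' (i : ℤ)).1.1 := by
        intro h
        exact hne (Subtype.ext (Prod.ext h hcase))
      refine ⟨i - 1, ?_, ?_⟩
      · omega
      · intro h
        apply hfst
        have h1 := hy (((i - 1 : ℕ) : ℤ))
        have h2 := hy' (((i - 1 : ℕ) : ℤ))
        have hii : ((i - 1 : ℕ) : ℤ) + 1 = (i : ℤ) := by omega
        rw [hii] at h1 h2
        have := congrArg Subtype.val h
        rw [h1, h2] at this
        exact congrArg Prod.snd this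
    · refine ⟨i, le_trans (Nat.le_succ N) hNi, ?_⟩
      intro h
      apply hcase
      have := congrArg Subtype.val h
      rw [hy, hy'] at this
      exact congrArg Prod.fst this

end Paper
end

section
/- Let G be a strongly connected directed graph that is infinite (has infinitely many vertices or a vertex with two distinct outgoing edges and infinitely many distinct cycles) and let H be any directed graph admitting a bi-infinite path y such that y[0,∞] is geodesic. If G has a vertex v with two distinct outgoing edges e₁, e₂, each starting a cycle w₁, w₂ respectively, then the tensor product graph H × G contains an eventually geodesic strictly proximal pair of bi-infinite paths. -/
namespace Paper

variable {A B C : Type*}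

variable {V E V' E' : Type*}

/-- Tensor product of directed graphs. -/
def tensorG {VH EH VG EG : Type*} (H : DiGraph VH EH) (G : DiGraph VG EG) :
    DiGraph (VH × VG) (EH × EG) :=
  ⟨fun e => (H.ini e.1, G.ini e.2), fun e => (H.ter e.1, G.ter e.2)⟩


/-!
A path in `H × G` projects to a path in `H` of the same length, so `(y, z)` is eventually
geodesic as soon as `y` is, whatever `z` is; it therefore suffices to find a strictly proximal
pair of bi-infinite paths in `G`. The cycles `u₁ = w₁w₂` and `u₂ = w₂w₁` at `v` have the same
length, so any `ℤ`-indexed choice between them concatenates to a bi-infinite path. Take `u₁`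
everywhere for `z₁`, and for `z₂` switch to `u₂` exactly at the perfect-square block indices:
the gaps between consecutive squares grow, so `z₁` and `z₂` agree on arbitrarily long windows,
while at every square block they start with the distinct edges `e₁ ≠ e₂`.
-/

def IsClosedWalk (G : DiGraph V E) (v : V) (m : ℕ) (p : Fin (m + 1) → E) : Prop :=
  FinPath G m p ∧ G.ini (p 0) = v ∧ G.ter (p (Fin.last m)) = v

def blockConcat {ι : Type*} (m : ℕ) (c : ι → Fin (m + 1) → E) (s : ℤ → ι) : ℤ → E :=
  fun i => c (s (i / (m + 1))) (Fin.ofNat (m + 1) (i % (m + 1)).toNat)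

section Walks

variable {G : DiGraph V E} {v : V} {m n : ℕ}

theorem FinPath.append {p : Fin (m + 1) → E} {q : Fin (n + 1) → E}
    (hp : FinPath G m p) (hq : FinPath G n q) (h : G.ter (p (Fin.last m)) = G.ini (q 0)) :
    FinPath G (m + 1 + n) (Fin.append (n := n + 1) p q) := by
  intro k
  induction k using Fin.addCases with
  | left i =>
    induction i using Fin.lastCases with
    | last =>
      have hk : (Fin.castAdd n (Fin.last m)).castSucc = Fin.castAdd (n + 1) (Fin.last m) := rfl
      have hk' : (Fin.castAdd n (Fin.last m)).succ = Fin.natAdd (m + 1) (0 : Fin (n + 1)) := by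
        ext; simp
      rw [hk, hk', Fin.append_left, Fin.append_right]
      exact h
    | cast i =>
      have hk : (Fin.castAdd n i.castSucc).castSucc = Fin.castAdd (n + 1) i.castSucc := rfl
      have hk' : (Fin.castAdd n i.castSucc).succ = Fin.castAdd (n + 1) i.succ := rfl
      rw [hk, hk', Fin.append_left, Fin.append_left]
      exact hp i
  | right j =>
    have hk : (Fin.natAdd (m + 1) j).castSucc = Fin.natAdd (m + 1) j.castSucc := rfl
    have hk' : (Fin.natAdd (m + 1) j).succ = Fin.natAdd (m + 1) j.succ := rfl
    rw [hk, hk', Fin.append_right, Fin.append_right]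
    exact hq j

theorem Fin.append_apply_zero (p : Fin (m + 1) → E) (q : Fin (n + 1) → E) :
    Fin.append p q 0 = p 0 :=
  Fin.append_left p q 0

theorem IsClosedWalk.append {p : Fin (m + 1) → E} {q : Fin (n + 1) → E}
    (hp : IsClosedWalk G v m p) (hq : IsClosedWalk G v n q) :
    IsClosedWalk G v (m + 1 + n) (Fin.append (n := n + 1) p q) := by
  have hlast : Fin.last (m + 1 + n) = Fin.natAdd (m + 1) (Fin.last n) := rfl
  refine ⟨hp.1.append hq.1 (hp.2.2.trans hq.2.1.symm), ?_, ?_⟩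
  · rw [Fin.append_apply_zero]; exact hp.2.1
  · rw [hlast, Fin.append_right]; exact hq.2.2

theorem IsClosedWalk.comp_cast {p : Fin (m + 1) → E} (hp : IsClosedWalk G v m p) (h : n = m) :
    IsClosedWalk G v n (p ∘ Fin.cast (congrArg (· + 1) h)) := by
  subst h
  simpa using hp

end Walks

section Blocks

variable {ι : Type*} {G : DiGraph V E} {v : V} {m : ℕ} {c : ι → Fin (m + 1) → E}

theorem exists_eq_mul_add_fin (m : ℕ) (i : ℤ) :
    ∃ (q : ℤ) (r : Fin (m + 1)), i = q * (m + 1) + (r : ℕ) := by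
  have hm : (0 : ℤ) < m + 1 := by positivity
  refine ⟨i / (m + 1), ⟨(i % (m + 1)).toNat, by have := Int.emod_lt_of_pos i hm; omega⟩, ?_⟩
  rw [Int.toNat_of_nonneg (Int.emod_nonneg i hm.ne'), Int.ediv_mul_add_emod]

theorem blockConcat_mul_add (s : ℤ → ι) (q : ℤ) (r : Fin (m + 1)) :
    blockConcat m c s (q * (m + 1) + (r : ℕ)) = c (s q) r := by
  have hm : (m : ℤ) + 1 ≠ 0 := by positivity
  have hr : ((r : ℕ) : ℤ) < m + 1 := by have := r.isLt; omega
  have hdiv : (q * (m + 1) + (r : ℕ)) / (m + 1) = q := by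
    rw [add_comm, Int.add_mul_ediv_right _ _ hm, Int.ediv_eq_zero_of_lt (by positivity) hr,
      zero_add]
  have hmod : (q * (m + 1) + (r : ℕ)) % (m + 1) = (r : ℕ) := by
    rw [add_comm, Int.add_mul_emod_self_right, Int.emod_eq_of_lt (by positivity) hr]
  simp only [blockConcat, hdiv, hmod, Int.toNat_natCast, Fin.ofNat_val_eq_self]

theorem biPath_blockConcat (hc : ∀ j, IsClosedWalk G v m (c j)) (s : ℤ → ι) :
    BiPath G (blockConcat m c s) := by
  intro i
  obtain ⟨q, r, rfl⟩ := exists_eq_mul_add_fin m i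
  induction r using Fin.lastCases with
  | last =>
    have hi : q * (m + 1) + ((Fin.last m : ℕ) : ℤ) + 1
        = (q + 1) * (m + 1) + ((0 : Fin (m + 1)) : ℕ) := by
      simp only [Fin.val_last, Fin.val_zero]; push_cast; ring
    rw [hi, blockConcat_mul_add, blockConcat_mul_add, (hc _).2.2, (hc _).2.1]
  | cast k =>
    have hi : q * (m + 1) + ((k.castSucc : ℕ) : ℤ) + 1 = q * (m + 1) + ((k.succ : ℕ) : ℤ) := by
      simp only [Fin.val_castSucc, Fin.val_succ]; push_cast; ring
    rw [hi, blockConcat_mul_add, blockConcat_mul_add]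
    exact (hc _).1 k

theorem StrictProxPair.blockConcat {s t : ℤ → ι} (hst : StrictProxPair s t)
    (hc : Function.Injective fun j => c j 0) :
    StrictProxPair (blockConcat m c s) (blockConcat m c t) := by
  refine ⟨fun n => ?_, fun N => ?_⟩
  · obtain ⟨i, hi⟩ := hst.1 n
    refine ⟨i * (m + 1), fun k hk => ?_⟩
    have hblock : (((i * (m + 1) : ℕ) : ℤ) + k) / (m + 1) = (i : ℤ) + ((k / (m + 1) : ℕ) : ℤ) := by
      rw [add_comm, Int.natCast_ediv]; push_cast
      rw [Int.add_mul_ediv_right _ _ (by positivity), add_comm]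
    simp only [Paper.blockConcat, hblock, hi _ ((Nat.div_le_self k _).trans hk)]
  · obtain ⟨i, hNi, hne⟩ := hst.2 N
    refine ⟨i * (m + 1), hNi.trans (Nat.le_mul_of_pos_right i m.succ_pos), fun h => hne (hc ?_)⟩
    have hpos : ((i * (m + 1) : ℕ) : ℤ) = (i : ℤ) * (m + 1) + ((0 : Fin (m + 1)) : ℕ) := by
      simp
    rwa [hpos, blockConcat_mul_add, blockConcat_mul_add] at h

theorem strictProxPair_false_isSquare :
    StrictProxPair (fun _ : ℤ => false) (fun q : ℤ => decide (IsSquare q)) := by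
  refine ⟨fun n => ⟨(n + 1) * (n + 1) + 1, fun k hk => ?_⟩, fun N => ⟨N * N, Nat.le_mul_self N, ?_⟩⟩
  · have hsq : ¬ IsSquare ((n + 1) * (n + 1) + 1 + k) := fun ⟨t, ht⟩ =>
      Nat.not_exists_sq (m := n + 1) (by omega) (by nlinarith) ⟨t, ht.symm⟩
    have hcast : (((n + 1) * (n + 1) + 1 : ℕ) : ℤ) + k = (((n + 1) * (n + 1) + 1 + k : ℕ) : ℤ) := by
      push_cast; ring
    simp only [hcast, Int.isSquare_natCast_iff, hsq, decide_false]
  · simp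

theorem exists_biPath_strictProxPair {u₁ u₂ : Fin (m + 1) → E} (hu₁ : IsClosedWalk G v m u₁)
    (hu₂ : IsClosedWalk G v m u₂) (hne : u₁ 0 ≠ u₂ 0) :
    ∃ z₁ z₂ : ℤ → E, BiPath G z₁ ∧ BiPath G z₂ ∧ StrictProxPair z₁ z₂ := by
  let c : Bool → Fin (m + 1) → E := fun b => cond b u₂ u₁
  have hc : ∀ b, IsClosedWalk G v m (c b) := fun b => by cases b <;> assumption
  have hinj : Function.Injective fun b => c b 0 := by
    intro a b h
    cases a <;> cases b <;> simp_all [c, eq_comm]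
  exact ⟨_, _, biPath_blockConcat hc _, biPath_blockConcat hc _,
    strictProxPair_false_isSquare.blockConcat hinj⟩

end Blocks

section Tensor

variable {VH EH VG EG : Type*} {H : DiGraph VH EH} {G : DiGraph VG EG}

theorem BiPath.tensorG {y : ℤ → EH} {z : ℤ → EG} (hy : BiPath H y) (hz : BiPath G z) :
    BiPath (tensorG H G) (fun i => (y i, z i)) :=
  fun i => Prod.ext (hy i) (hz i)

theorem FinPath.fst_of_tensorG {m : ℕ} {p : Fin (m + 1) → EH × EG}
    (hp : FinPath (tensorG H G) m p) : FinPath H m (fun k => (p k).1) :=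
  fun k => congrArg Prod.fst (hp k)

theorem GeodesicSeg.tensorG {y : ℤ → EH} {i : ℤ} {n : ℕ} (hy : GeodesicSeg H y i n) (z : ℤ → EG) :
    GeodesicSeg (tensorG H G) (fun i => (y i, z i)) i n :=
  fun m _ hp h0 hlast => hy m _ hp.fst_of_tensorG (congrArg Prod.fst h0) (congrArg Prod.fst hlast)

theorem EvGeodesic.tensorG {y : ℤ → EH} (hy : EvGeodesic H y) (z : ℤ → EG) :
    EvGeodesic (tensorG H G) (fun i => (y i, z i)) :=
  hy.imp fun _ h i hi n => (h i hi n).tensorG z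

theorem StrictProxPair.prodMk_left {α β : Type*} {z₁ z₂ : ℤ → β} (hz : StrictProxPair z₁ z₂)
    (y : ℤ → α) : StrictProxPair (fun i => (y i, z₁ i)) (fun i => (y i, z₂ i)) :=
  ⟨fun n => (hz.1 n).imp fun _ h k hk => Prod.ext rfl (h k hk),
    fun N => (hz.2 N).imp fun _ ⟨hN, hne⟩ => ⟨hN, fun h => hne (congrArg Prod.snd h)⟩⟩

theorem hasEvGeoProxPair_tensorG {y : ℤ → EH} {z₁ z₂ : ℤ → EG} (hy : BiPath H y)
    (hgeo : EvGeodesic H y) (hz₁ : BiPath G z₁) (hz₂ : BiPath G z₂) (hz : StrictProxPair z₁ z₂) :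
    HasEvGeoProxPair (tensorG H G) :=
  ⟨_, _, hy.tensorG hz₁, hy.tensorG hz₂, hgeo.tensorG z₁, hgeo.tensorG z₂, hz.prodMk_left y⟩

end Tensor

theorem stmt9_general {VH EH VG EG : Type*} (H : DiGraph VH EH) (G : DiGraph VG EG)
    (y : ℤ → EH) (hy : BiPath H y)
    (hygeo : ∀ i : ℤ, 0 ≤ i → ∀ n : ℕ, GeodesicSeg H y i n)
    (v : VG) (e₁ e₂ : EG) (hne : e₁ ≠ e₂) (he₁ : G.ini e₁ = v) (he₂ : G.ini e₂ = v)
    (n₁ n₂ : ℕ) (w₁ : Fin (n₁ + 1) → EG) (w₂ : Fin (n₂ + 1) → EG)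
    (hw₁ : FinPath G n₁ w₁) (hw₂ : FinPath G n₂ w₂)
    (hw₁0 : w₁ 0 = e₁) (hw₂0 : w₂ 0 = e₂)
    (hc₁ : G.ter (w₁ (Fin.last n₁)) = v) (hc₂ : G.ter (w₂ (Fin.last n₂)) = v) :
    HasEvGeoProxPair (tensorG H G) := by
  have hcyc₁ : IsClosedWalk G v n₁ w₁ := ⟨hw₁, hw₁0 ▸ he₁, hc₁⟩
  have hcyc₂ : IsClosedWalk G v n₂ w₂ := ⟨hw₂, hw₂0 ▸ he₂, hc₂⟩
  have hu₁ := hcyc₁.append hcyc₂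
  have hu₂ := (hcyc₂.append hcyc₁).comp_cast (show n₁ + 1 + n₂ = n₂ + 1 + n₁ by omega)
  obtain ⟨z₁, z₂, hz₁, hz₂, hz⟩ := exists_biPath_strictProxPair hu₁ hu₂ (by
    simpa only [Function.comp_apply, Fin.cast_zero, Fin.append_apply_zero, hw₁0, hw₂0] using hne)
  exact hasEvGeoProxPair_tensorG hy ⟨0, hygeo⟩ hz₁ hz₂ hz

theorem stmt9 {VH EH VG EG : Type*} (H : DiGraph VH EH) (G : DiGraph VG EG)
    (hsc : ∀ u v : VG,
      Relation.ReflTransGen (fun a b => ∃ e : EG, G.ini e = a ∧ G.ter e = b) u v)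
    (y : ℤ → EH) (hy : BiPath H y)
    (hygeo : ∀ i : ℤ, 0 ≤ i → ∀ n : ℕ, GeodesicSeg H y i n)
    (v : VG) (e₁ e₂ : EG) (hne : e₁ ≠ e₂) (he₁ : G.ini e₁ = v) (he₂ : G.ini e₂ = v)
    (n₁ n₂ : ℕ) (w₁ : Fin (n₁ + 1) → EG) (w₂ : Fin (n₂ + 1) → EG)
    (hw₁ : FinPath G n₁ w₁) (hw₂ : FinPath G n₂ w₂)
    (hw₁0 : w₁ 0 = e₁) (hw₂0 : w₂ 0 = e₂)
    (hc₁ : G.ter (w₁ (Fin.last n₁)) = v) (hc₂ : G.ter (w₂ (Fin.last n₂)) = v) :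
    HasEvGeoProxPair (tensorG H G) :=
  stmt9_general H G y hy hygeo v e₁ e₂ hne he₁ he₂ n₁ n₂ w₁ w₂ hw₁ hw₂ hw₁0 hw₂0 hc₁ hc₂

end Paper
end
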